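/- For real α > 0, 1 < β < 2, and T' > T ≥ 1, there exists a constant C (depending only on α, β) such that ∫_T^{T'} e^{-αt} t^β (t−T) dt ≤ C (e^{-αT'} (T')^{β+1} + e^{-αT} T^β). -/

import Mathlib

/-!
Write `s = t - T`. Since `T ≥ 1` and `β ≤ 2`, `(t / T) ^ β ≤ (t / T) ^ 2 ≤ (1 + s) ^ 2`, so the integrand
is at most `e^{-αT} T^β · e^{-αs} s (1 + s)^2`. The second factor is integrable on `(0, ∞)`, so its
integral over `[0, T' - T]` is bounded independently of `T` and `T'`, and the whole integral is at most
a constant times `e^{-αT} T^β`.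
-/

open MeasureTheory Real Set

lemma rpow_le_rpow_mul_one_add_sub_sq {β T t : ℝ} (hβ : β ≤ 2) (hT : 1 ≤ T) (hTt : T ≤ t) :
    t ^ β ≤ T ^ β * (1 + (t - T)) ^ 2 := by
  have hT0 : 0 < T := by linarith
  have hratio : 1 ≤ t / T := (one_le_div hT0).mpr hTt
  have hratio_le : t / T ≤ 1 + (t - T) := by
    rw [div_le_iff₀ hT0]; nlinarith
  calc t ^ β = T ^ β * (t / T) ^ β := by
        rw [div_rpow (by linarith) hT0.le, mul_div_cancel₀ _ (rpow_pos_of_pos hT0 β).ne']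
    _ ≤ T ^ β * (t / T) ^ (2 : ℕ) := by
        gcongr
        exact_mod_cast rpow_le_rpow_of_exponent_le hratio hβ
    _ ≤ T ^ β * (1 + (t - T)) ^ 2 := by gcongr

lemma integrableOn_pow_mul_exp_neg_mul {α : ℝ} (hα : 0 < α) (k : ℕ) :
    IntegrableOn (fun x : ℝ => x ^ k * exp (-α * x)) (Ioi 0) :=
  (integrableOn_rpow_mul_exp_neg_mul_rpow (s := k) (by linarith [k.cast_nonneg (α := ℝ)])
    one_pos hα).congr_fun (fun x _ => by simp) measurableSet_Ioi

noncomputable def expDecayKernel (α s : ℝ) : ℝ :=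
  exp (-α * s) * (s * (1 + s) ^ 2)

section expDecayKernel

variable {α : ℝ}

lemma continuous_expDecayKernel : Continuous (expDecayKernel α) := by
  unfold expDecayKernel; fun_prop

lemma expDecayKernel_nonneg {s : ℝ} (hs : 0 ≤ s) : 0 ≤ expDecayKernel α s := by
  unfold expDecayKernel; positivity

lemma integrableOn_expDecayKernel (hα : 0 < α) : IntegrableOn (expDecayKernel α) (Ioi 0) := by
  have h := ((integrableOn_pow_mul_exp_neg_mul hα 1).add
    ((integrableOn_pow_mul_exp_neg_mul hα 2).const_mul 2)).add (integrableOn_pow_mul_exp_neg_mul hα 3)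
  refine h.congr_fun (fun s _ => ?_) measurableSet_Ioi
  simp only [expDecayKernel, Pi.add_apply]
  ring

lemma intervalIntegral_expDecayKernel_le (hα : 0 < α) {L : ℝ} (hL : 0 ≤ L) :
    ∫ s in (0 : ℝ)..L, expDecayKernel α s ≤ ∫ s in Ioi 0, expDecayKernel α s := by
  rw [intervalIntegral.integral_of_le hL]
  refine setIntegral_mono_set (integrableOn_expDecayKernel hα) ?_ Ioc_subset_Ioi_self.eventuallyLE
  filter_upwards [ae_restrict_mem measurableSet_Ioi] with s hs
  exact expDecayKernel_nonneg (le_of_lt hs)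

end expDecayKernel

lemma exp_mul_rpow_mul_sub_le {α β T t : ℝ} (hβ : β ≤ 2) (hT : 1 ≤ T) (hTt : T ≤ t) :
    exp (-α * t) * t ^ β * (t - T) ≤ exp (-α * T) * T ^ β * expDecayKernel α (t - T) := by
  have hexp : exp (-α * t) = exp (-α * T) * exp (-α * (t - T)) := by
    rw [← exp_add]; ring_nf
  calc exp (-α * t) * t ^ β * (t - T)
      ≤ exp (-α * t) * (T ^ β * (1 + (t - T)) ^ 2) * (t - T) := by
        gcongr
        exact rpow_le_rpow_mul_one_add_sub_sq hβ hT hTt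
    _ = exp (-α * T) * T ^ β * expDecayKernel α (t - T) := by
        rw [hexp, expDecayKernel]; ring

lemma integral_exp_mul_rpow_mul_sub_le {α β T T' : ℝ} (hα : 0 < α) (hβ : β ≤ 2) (hT : 1 ≤ T)
    (hTT' : T ≤ T') :
    ∫ t in T..T', exp (-α * t) * t ^ β * (t - T) ≤
      exp (-α * T) * T ^ β * ∫ s in Ioi 0, expDecayKernel α s := by
  have hT0 : 0 < T := by linarith
  have hintegrand : ContinuousOn (fun t => exp (-α * t) * t ^ β * (t - T)) (uIcc T T') := by
    rw [uIcc_of_le hTT']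
    exact ContinuousOn.mul (ContinuousOn.mul (by fun_prop)
      (continuousOn_id.rpow_const fun x hx => Or.inl (by linarith [hx.1] : (0 : ℝ) < x).ne')) (by fun_prop)
  have hmajorant : Continuous fun t => exp (-α * T) * T ^ β * expDecayKernel α (t - T) :=
    continuous_const.mul (continuous_expDecayKernel.comp (continuous_sub_right T))
  calc ∫ t in T..T', exp (-α * t) * t ^ β * (t - T)
      ≤ ∫ t in T..T', exp (-α * T) * T ^ β * expDecayKernel α (t - T) :=
        intervalIntegral.integral_mono_on hTT' hintegrand.intervalIntegrable
          (hmajorant.intervalIntegrable T T') fun t ht => exp_mul_rpow_mul_sub_le hβ hT ht.1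
    _ = exp (-α * T) * T ^ β * ∫ s in (0 : ℝ)..(T' - T), expDecayKernel α s := by
        rw [intervalIntegral.integral_const_mul, intervalIntegral.integral_comp_sub_right, sub_self]
    _ ≤ exp (-α * T) * T ^ β * ∫ s in Ioi 0, expDecayKernel α s := by
        gcongr
        exact intervalIntegral_expDecayKernel_le hα (by linarith)

theorem stmt_1_general (α β : ℝ) (hα : 0 < α) (hβ2 : β < 2) :
    ∃ C : ℝ, ∀ T T' : ℝ, 1 ≤ T → T < T' →
      (∫ t in T..T', Real.exp (-α * t) * t ^ β * (t - T)) ≤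
        C * (Real.exp (-α * T') * T' ^ (β + 1) + Real.exp (-α * T) * T ^ β) := by
  set C := ∫ s in Ioi 0, expDecayKernel α s
  have hC : 0 ≤ C := setIntegral_nonneg measurableSet_Ioi fun s hs => expDecayKernel_nonneg hs.le
  refine ⟨C, fun T T' hT hTT' => ?_⟩
  have hT'_term : 0 ≤ exp (-α * T') * T' ^ (β + 1) :=
    mul_nonneg (exp_pos _).le (rpow_nonneg (by linarith) _)
  calc ∫ t in T..T', exp (-α * t) * t ^ β * (t - T)
      ≤ exp (-α * T) * T ^ β * C := integral_exp_mul_rpow_mul_sub_le hα hβ2.le hT hTT'.le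
    _ ≤ C * (exp (-α * T') * T' ^ (β + 1) + exp (-α * T) * T ^ β) := by
        nlinarith [mul_nonneg hC hT'_term]

theorem stmt_1 (α β : ℝ) (hα : 0 < α) (hβ1 : 1 < β) (hβ2 : β < 2) :
    ∃ C : ℝ, ∀ T T' : ℝ, 1 ≤ T → T < T' →
      (∫ t in T..T', Real.exp (-α * t) * t ^ β * (t - T)) ≤
        C * (Real.exp (-α * T') * T' ^ (β + 1) + Real.exp (-α * T) * T ^ β) :=
  stmt_1_general α β hα hβ2
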